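/- If the forward shift S is bounded on H^p(T), then for every m ∈ ℕ, ‖S^m‖ = (sup{K(m,n−m)·γ(n−m)/γ(n) : n ≥ m})^{1/p}. -/

import Mathlib

open scoped BigOperators
open Classical

/-- An infinite, locally finite rooted tree, presented combinatorially via a
parent function and a level (distance-to-root) function.  Every level is a
finite nonempty set of vertices. -/
structure HTree where
  V : Type
  root : V
  parent : V → V
  level : V → ℕ
  level_root : level root = 0
  root_of_level_zero : ∀ v, level v = 0 → v = root
  level_parent : ∀ v, v ≠ root → level (parent v) + 1 = level v
  finite_level : ∀ n : ℕ, {v : V | level v = n}.Finite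
  nonempty_level : ∀ n : ℕ, {v : V | level v = n}.Nonempty

namespace HTree

variable (T : HTree)

/-- The finite set of vertices at level `n`. -/
noncomputable def levelFinset (n : ℕ) : Finset T.V := (T.finite_level n).toFinset

/-- `γ(n)`, the number of vertices at level `n`. -/
noncomputable def gamma (n : ℕ) : ℕ := (T.levelFinset n).card

/-- The set of `m`-children of a vertex `v`. -/
noncomputable def nChildrenFinset (m : ℕ) (v : T.V) : Finset T.V :=
  (T.levelFinset (T.level v + m)).filter (fun w => T.parent^[m] w = v)

/-- `γ(m,v)`, the number of `m`-children of `v`. -/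
noncomputable def numNChildren (m : ℕ) (v : T.V) : ℕ := (T.nChildrenFinset m v).card

/-- The set of children of a vertex. -/
noncomputable def childrenFinset (v : T.V) : Finset T.V := T.nChildrenFinset 1 v

/-- `γ(1,v)`, the number of children of `v`. -/
noncomputable def numChildren (v : T.V) : ℕ := T.numNChildren 1 v

/-- `K(m,r)`, the maximal number of `m`-children among vertices at level `r`. -/
noncomputable def K (m r : ℕ) : ℕ := (T.levelFinset r).sup (fun v => T.numNChildren m v)

/-- `M_p^p(n,f)`, the `p`-th power of the `p`-th mean of `|f|` over level `n`. -/
noncomputable def Mpp (p : ℝ) (f : T.V → ℂ) (n : ℕ) : ℝ :=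
  (1 / (T.gamma n : ℝ)) * ∑ v ∈ T.levelFinset n, ‖f v‖ ^ p

/-- `M_p(n,f)`, the `p`-th mean of `|f|` over level `n`. -/
noncomputable def Mp (p : ℝ) (f : T.V → ℂ) (n : ℕ) : ℝ := (T.Mpp p f n) ^ (1 / p)

/-- Membership in the Hardy space `H^p(T)`. -/
def MemHp (p : ℝ) (f : T.V → ℂ) : Prop := ∃ C : ℝ, ∀ n : ℕ, T.Mp p f n ≤ C

/-- Membership in the little Hardy space `H^p_0(T)`. -/
def MemHp0 (p : ℝ) (f : T.V → ℂ) : Prop :=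
  Filter.Tendsto (T.Mp p f) Filter.atTop (nhds 0)

/-- The `H^p` norm, `sup_n M_p(n,f)`. -/
noncomputable def Hnorm (p : ℝ) (f : T.V → ℂ) : ℝ := ⨆ n : ℕ, T.Mp p f n

/-- The forward shift `(Sf)(v) = f(parent v)`, `(Sf)(root) = 0`. -/
noncomputable def S (f : T.V → ℂ) : T.V → ℂ := fun v => if v = T.root then 0 else f (T.parent v)

/-- The backward shift `(Bf)(v) = Σ_{w child of v} f(w)`. -/
noncomputable def B (f : T.V → ℂ) : T.V → ℂ := fun v => ∑ w ∈ T.childrenFinset v, f w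

/-- An operator `A` is bounded on the subspace described by `Mem`, with the
`H^p` norm. -/
def BoundedOn (A : (T.V → ℂ) → (T.V → ℂ)) (Mem : (T.V → ℂ) → Prop) (p : ℝ) : Prop :=
  ∃ C : ℝ, 0 ≤ C ∧ ∀ f, Mem f → Mem (A f) ∧ T.Hnorm p (A f) ≤ C * T.Hnorm p f

/-- The operator norm of `A` on the subspace described by `Mem`. -/
noncomputable def opNorm (A : (T.V → ℂ) → (T.V → ℂ)) (Mem : (T.V → ℂ) → Prop) (p : ℝ) : ℝ :=
  sInf {C : ℝ | 0 ≤ C ∧ ∀ f, Mem f → Mem (A f) ∧ T.Hnorm p (A f) ≤ C * T.Hnorm p f}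

/-- Hypercyclicity of an operator `A` on the subspace described by `Mem`. -/
def Hypercyclic (A : (T.V → ℂ) → (T.V → ℂ)) (Mem : (T.V → ℂ) → Prop) (p : ℝ) : Prop :=
  ∃ f, Mem f ∧ ∀ g, Mem g → ∀ ε : ℝ, 0 < ε →
    ∃ N : ℕ, T.Hnorm p (fun v => A^[N] f v - g v) < ε

end HTree

/-! Since `(S^m f)(v) = f(parent^m v)` off the first `m` levels, the level-`(r+m)` mean of `S^m f`
is a level-`r` mean of `f` weighted by the numbers `γ(m,u)`, so
`M_p^p(r+m, S^m f) ≤ K(m,r) γ(r)/γ(r+m) · M_p^p(r, f)`, with equality for the point mass at a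
vertex of level `r` having `K(m,r)` `m`-children. Hence `C ≥ 0` bounds `S^m` exactly when `C^p`
dominates every ratio `K(m,r) γ(r)/γ(r+m)`, and the least such `C` is the `p`-th root of their
supremum. -/

namespace Real

theorem rpow_one_div_le_mul_rpow_one_div_iff {a b C p : ℝ} (ha : 0 ≤ a) (hb : 0 ≤ b)
    (hC : 0 ≤ C) (hp : 0 < p) : a ^ (1 / p) ≤ C * b ^ (1 / p) ↔ a ≤ C ^ p * b := by
  have hCb : C * b ^ (1 / p) = (C ^ p * b) ^ (1 / p) := by
    rw [mul_rpow (rpow_nonneg hC p) hb, ← rpow_mul hC, mul_one_div_cancel hp.ne', rpow_one]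
  rw [hCb, rpow_le_rpow_iff ha (by positivity) (one_div_pos.2 hp)]

/-- Outside the bounded case both sides are `0`: the set is empty and the supremum is junk. -/
theorem sInf_setOf_forall_le_rpow {a : ℕ → ℝ} (ha : ∀ n, 0 ≤ a n) {p : ℝ} (hp : 0 < p) :
    sInf {C : ℝ | 0 ≤ C ∧ ∀ n, a n ≤ C ^ p} = (⨆ n, a n) ^ (1 / p) := by
  by_cases hbdd : BddAbove (Set.range a)
  · have hsup : 0 ≤ ⨆ n, a n := iSup_nonneg ha
    suffices {C : ℝ | 0 ≤ C ∧ ∀ n, a n ≤ C ^ p} = Set.Ici ((⨆ n, a n) ^ (1 / p)) by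
      rw [this, csInf_Ici]
    ext C
    rw [Set.mem_ofPred_eq, Set.mem_Ici, ← ciSup_le_iff hbdd, one_div]
    constructor
    · rintro ⟨hC, hle⟩
      exact (rpow_inv_le_iff_of_pos hsup hC hp).2 hle
    · intro hle
      have hC : 0 ≤ C := (rpow_nonneg hsup _).trans hle
      exact ⟨hC, (rpow_inv_le_iff_of_pos hsup hC hp).1 hle⟩
  · have hempty : {C : ℝ | 0 ≤ C ∧ ∀ n, a n ≤ C ^ p} = ∅ := by
      refine Set.eq_empty_of_forall_notMem fun C ⟨_, hle⟩ => hbdd ⟨C ^ p, ?_⟩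
      rintro _ ⟨n, rfl⟩
      exact hle n
    rw [hempty, sInf_empty, iSup_of_not_bddAbove hbdd, zero_rpow (one_div_pos.2 hp).ne']

end Real

namespace HTree

variable (T : HTree)

@[simp]
theorem mem_levelFinset {n : ℕ} {v : T.V} : v ∈ T.levelFinset n ↔ T.level v = n := by
  simp [levelFinset]

theorem levelFinset_nonempty (n : ℕ) : (T.levelFinset n).Nonempty := by
  obtain ⟨v, hv⟩ := T.nonempty_level n
  exact ⟨v, T.mem_levelFinset.2 hv⟩

theorem gamma_pos (n : ℕ) : (0 : ℝ) < T.gamma n := by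
  exact_mod_cast (T.levelFinset_nonempty n).card_pos

theorem level_parent_iterate {k : ℕ} {v : T.V} (h : k ≤ T.level v) :
    T.level (T.parent^[k] v) = T.level v - k := by
  induction k with
  | zero => simp
  | succ j ih =>
    have hj := ih (by omega)
    have hne : T.parent^[j] v ≠ T.root := fun hr => by
      rw [hr, T.level_root] at hj
      omega
    have := T.level_parent _ hne
    rw [Function.iterate_succ_apply']
    omega

theorem S_iterate_apply (m : ℕ) (f : T.V → ℂ) (v : T.V) :
    T.S^[m] f v = if T.level v < m then 0 else f (T.parent^[m] v) := by
  induction m generalizing f v with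
  | zero => simp
  | succ j ih =>
    rw [Function.iterate_succ_apply', S]
    by_cases hr : v = T.root
    · simp [hr, T.level_root]
    · have hl := T.level_parent v hr
      have hlt : T.level (T.parent v) < j ↔ T.level v < j + 1 := by omega
      rw [if_neg hr, ih, Function.iterate_succ_apply]
      simp only [hlt]

theorem sum_levelFinset_comp_parent_iterate (r m : ℕ) (g : T.V → ℝ) :
    ∑ v ∈ T.levelFinset (r + m), g (T.parent^[m] v)
      = ∑ u ∈ T.levelFinset r, (T.numNChildren m u : ℝ) * g u := by
  have hmaps : ∀ v ∈ T.levelFinset (r + m), T.parent^[m] v ∈ T.levelFinset r := by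
    intro v hv
    rw [mem_levelFinset] at hv ⊢
    rw [T.level_parent_iterate (by omega)]
    omega
  rw [← Finset.sum_fiberwise_of_maps_to hmaps]
  refine Finset.sum_congr rfl fun u hu => ?_
  rw [mem_levelFinset] at hu
  rw [numNChildren, nChildrenFinset, hu, Finset.cast_card, Finset.sum_mul, one_mul]
  exact Finset.sum_congr rfl fun w hw => by rw [(Finset.mem_filter.1 hw).2]

variable {T}

theorem Mpp_nonneg (p : ℝ) (f : T.V → ℂ) (n : ℕ) : 0 ≤ T.Mpp p f n :=
  mul_nonneg (by positivity) (Finset.sum_nonneg fun v _ => by positivity)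

theorem Mp_le_Hnorm {p : ℝ} {f : T.V → ℂ} (hf : T.MemHp p f) (n : ℕ) :
    T.Mp p f n ≤ T.Hnorm p f := by
  obtain ⟨C, hC⟩ := hf
  exact le_ciSup ⟨C, by rintro _ ⟨k, rfl⟩; exact hC k⟩ n

theorem Mpp_S_iterate_of_lt {p : ℝ} (hp : p ≠ 0) {m n : ℕ} (hn : n < m) (f : T.V → ℂ) :
    T.Mpp p (T.S^[m] f) n = 0 := by
  rw [Mpp, Finset.sum_eq_zero, mul_zero]
  intro v hv
  rw [mem_levelFinset] at hv
  rw [S_iterate_apply, if_pos (by omega), norm_zero, Real.zero_rpow hp]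

theorem Mpp_S_iterate_add (p : ℝ) (m r : ℕ) (f : T.V → ℂ) :
    T.Mpp p (T.S^[m] f) (r + m)
      = 1 / T.gamma (r + m) * ∑ u ∈ T.levelFinset r, (T.numNChildren m u : ℝ) * ‖f u‖ ^ p := by
  rw [Mpp, ← sum_levelFinset_comp_parent_iterate]
  congr 1
  refine Finset.sum_congr rfl fun v hv => ?_
  rw [mem_levelFinset] at hv
  rw [S_iterate_apply, if_neg (by omega)]

theorem Mpp_S_iterate_add_le (p : ℝ) (m r : ℕ) (f : T.V → ℂ) :
    T.Mpp p (T.S^[m] f) (r + m)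
      ≤ (T.K m r : ℝ) * T.gamma r / T.gamma (r + m) * T.Mpp p f r := by
  have hsum : ∑ u ∈ T.levelFinset r, (T.numNChildren m u : ℝ) * ‖f u‖ ^ p
      ≤ T.K m r * ∑ u ∈ T.levelFinset r, ‖f u‖ ^ p := by
    rw [Finset.mul_sum]
    refine Finset.sum_le_sum fun u hu => mul_le_mul_of_nonneg_right ?_ (by positivity)
    exact_mod_cast Finset.le_sup (f := T.numNChildren m) hu
  have hγ := T.gamma_pos r
  calc T.Mpp p (T.S^[m] f) (r + m)
      ≤ 1 / T.gamma (r + m) * (T.K m r * ∑ u ∈ T.levelFinset r, ‖f u‖ ^ p) := by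
        rw [Mpp_S_iterate_add]
        exact mul_le_mul_of_nonneg_left hsum (by positivity)
    _ = (T.K m r : ℝ) * T.gamma r / T.gamma (r + m) * T.Mpp p f r := by
        rw [Mpp]
        field_simp

theorem sum_mul_norm_single_rpow {p : ℝ} (hp : p ≠ 0) (u : T.V) (s : Finset T.V)
    (g : T.V → ℝ) :
    ∑ v ∈ s, g v * ‖(Pi.single u 1 : T.V → ℂ) v‖ ^ p = if u ∈ s then g u else 0 := by
  simp [Pi.single_apply, apply_ite (fun z : ℂ => ‖z‖ ^ p), Real.zero_rpow hp]

theorem Mpp_single_le {p : ℝ} (hp : p ≠ 0) (u : T.V) (k : ℕ) :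
    T.Mpp p (Pi.single u 1) k ≤ 1 / T.gamma (T.level u) := by
  have hsum := sum_mul_norm_single_rpow hp u (T.levelFinset k) 1
  simp only [Pi.one_apply, one_mul] at hsum
  rw [Mpp, hsum]
  split_ifs with hk
  · rw [T.mem_levelFinset.1 hk, mul_one]
  · rw [mul_zero]
    exact (one_div_pos.2 (T.gamma_pos _)).le

theorem Mpp_S_iterate_single {p : ℝ} (hp : p ≠ 0) (m : ℕ) (u : T.V) :
    T.Mpp p (T.S^[m] (Pi.single u 1)) (T.level u + m)
      = T.numNChildren m u / T.gamma (T.level u + m) := by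
  rw [Mpp_S_iterate_add, sum_mul_norm_single_rpow hp, if_pos (T.mem_levelFinset.2 rfl),
    one_div_mul_eq_div]

theorem K_mul_gamma_div_le_rpow_of_bound {p : ℝ} (hp : 0 < p) {m : ℕ} {C : ℝ} (hC : 0 ≤ C)
    (h : ∀ f, T.MemHp p f → T.MemHp p (T.S^[m] f) ∧ T.Hnorm p (T.S^[m] f) ≤ C * T.Hnorm p f)
    (n : ℕ) :
    (T.K m n : ℝ) * T.gamma n / T.gamma (n + m) ≤ C ^ p := by
  obtain ⟨u, hu, hK⟩ := Finset.exists_mem_eq_sup _ (T.levelFinset_nonempty n) (T.numNChildren m)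
  rw [mem_levelFinset] at hu
  have hMp : ∀ k, T.Mp p (Pi.single u 1) k ≤ (1 / T.gamma n) ^ (1 / p) := fun k =>
    Real.rpow_le_rpow (Mpp_nonneg p _ k) (hu ▸ Mpp_single_le hp.ne' u k) (by positivity)
  obtain ⟨hmem, hle⟩ := h _ ⟨_, hMp⟩
  have hmean : ((T.K m n : ℝ) / T.gamma (n + m)) ^ (1 / p) ≤ C * (1 / T.gamma n) ^ (1 / p) :=
    calc ((T.K m n : ℝ) / T.gamma (n + m)) ^ (1 / p)
        = T.Mp p (T.S^[m] (Pi.single u 1)) (n + m) := by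
          rw [Mp, ← hu, Mpp_S_iterate_single hp.ne', K, hu, hK]
      _ ≤ T.Hnorm p (T.S^[m] (Pi.single u 1)) := Mp_le_Hnorm hmem _
      _ ≤ C * T.Hnorm p (Pi.single u 1) := hle
      _ ≤ C * (1 / T.gamma n) ^ (1 / p) := mul_le_mul_of_nonneg_left (ciSup_le hMp) hC
  rw [Real.rpow_one_div_le_mul_rpow_one_div_iff (by positivity) (by positivity) hC hp] at hmean
  rw [mul_div_right_comm, ← le_div_iff₀ (T.gamma_pos n), div_eq_mul_one_div (C ^ p)]
  exact hmean

theorem memHp_S_iterate_and_Hnorm_le {p : ℝ} (hp : 0 < p) {m : ℕ} {C : ℝ} (hC : 0 ≤ C)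
    (h : ∀ n, (T.K m n : ℝ) * T.gamma n / T.gamma (n + m) ≤ C ^ p) {f : T.V → ℂ}
    (hf : T.MemHp p f) :
    T.MemHp p (T.S^[m] f) ∧ T.Hnorm p (T.S^[m] f) ≤ C * T.Hnorm p f := by
  have hMp : ∀ n, T.Mp p (T.S^[m] f) n ≤ C * T.Hnorm p f := by
    intro n
    rcases lt_or_ge n m with hn | hn
    · rw [Mp, Mpp_S_iterate_of_lt hp.ne' hn, Real.zero_rpow (one_div_pos.2 hp).ne']
      exact mul_nonneg hC ((Real.rpow_nonneg (Mpp_nonneg p f 0) _).trans (Mp_le_Hnorm hf 0))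
    obtain ⟨r, rfl⟩ := Nat.exists_eq_add_of_le' hn
    have hMpp : T.Mpp p (T.S^[m] f) (r + m) ≤ C ^ p * T.Mpp p f r :=
      (Mpp_S_iterate_add_le p m r f).trans
        (mul_le_mul_of_nonneg_right (h r) (Mpp_nonneg p f r))
    calc T.Mp p (T.S^[m] f) (r + m) ≤ C * T.Mp p f r :=
          (Real.rpow_one_div_le_mul_rpow_one_div_iff (Mpp_nonneg p _ _) (Mpp_nonneg p f r) hC
            hp).2 hMpp
      _ ≤ C * T.Hnorm p f := mul_le_mul_of_nonneg_left (Mp_le_Hnorm hf r) hC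
  exact ⟨⟨_, hMp⟩, ciSup_le hMp⟩

end HTree

theorem forward_shift_power_norm_general (T : HTree) (p : ℝ) (hp : 1 ≤ p) (m : ℕ) :
    T.opNorm ((T.S)^[m]) (T.MemHp p) p =
      (⨆ n : ℕ, (T.K m n : ℝ) * (T.gamma n : ℝ) / (T.gamma (n + m) : ℝ)) ^ (1 / p) := by
  have hp0 : 0 < p := by linarith
  rw [HTree.opNorm, ← Real.sInf_setOf_forall_le_rpow (fun n => by positivity) hp0]
  congr 1
  ext C
  exact ⟨fun ⟨hC, h⟩ => ⟨hC, T.K_mul_gamma_div_le_rpow_of_bound hp0 hC h⟩,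
    fun ⟨hC, h⟩ => ⟨hC, fun f hf => T.memHp_S_iterate_and_Hnorm_le hp0 hC h hf⟩⟩

/-- norm of the powers of the forward shift on `H^p(T)`. -/
theorem forward_shift_power_norm (T : HTree) (p : ℝ) (hp : 1 ≤ p)
    (hb : T.BoundedOn T.S (T.MemHp p) p) (m : ℕ) (hm : 1 ≤ m) :
    T.opNorm ((T.S)^[m]) (T.MemHp p) p =
      (⨆ n : ℕ, (T.K m n : ℝ) * (T.gamma n : ℝ) / (T.gamma (n + m) : ℝ)) ^ (1 / p) :=
  forward_shift_power_norm_general T p hp m
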